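/- arXiv:1911.09140 — 4 statements merged into one kernel-verified Lean document; each statement's English description precedes it below -/
import Mathlib

section
/- Fix an integer p ≥ 1. There exists a polynomial Q_p ∈ ℤ[X_1,…,X_p,Y_1,…,Y_p], independent of n and m, such that for all integers n, m ≥ p, the p-th elementary symmetric polynomial in the n·m products X_i·Y_j (1 ≤ i ≤ n, 1 ≤ j ≤ m) equals Q_p evaluated at (e_1(X),…,e_p(X),e_1(Y),…,e_p(Y)), where e_k(X) and e_k(Y) denote the k-th elementary symmetric polynomials in the variables X_1,…,X_n and Y_1,…,Y_m respectively. -/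
open MvPolynomial Finset

noncomputable section EsymmProdUniversal

variable (R : Type*) [CommRing R]

/-- Substitution `X (i,j) ↦ Xᵢ · Yⱼ`. -/
def prodSub (n m : ℕ) : MvPolynomial (Fin n × Fin m) R →ₐ[R] MvPolynomial (Fin n ⊕ Fin m) R :=
  aeval fun v => X (Sum.inl v.1) * X (Sum.inr v.2)

/-- The `k`-th elementary symmetric polynomial of the products. -/
def Epoly (n m k : ℕ) : MvPolynomial (Fin n ⊕ Fin m) R :=
  prodSub R n m (esymm (Fin n × Fin m) R k)

/-- The target family: elementary symmetric polynomials of the `X`s and of the `Y`s. -/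
def Tfam (p n m : ℕ) : Fin p ⊕ Fin p → MvPolynomial (Fin n ⊕ Fin m) R :=
  Sum.elim (fun k => rename Sum.inl (esymm (Fin n) R ((k : ℕ) + 1)))
    (fun k => rename Sum.inr (esymm (Fin m) R ((k : ℕ) + 1)))

lemma Epoly_eq (n m k : ℕ) :
    Epoly R n m k = ∑ s ∈ powersetCard k (univ : Finset (Fin n × Fin m)),
      ∏ ij ∈ s, (X (Sum.inl ij.1) * X (Sum.inr ij.2) : MvPolynomial (Fin n ⊕ Fin m) R) := by
  simp [Epoly, prodSub, esymm, map_sum, map_prod]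

lemma Tfam_eq (p n m : ℕ) :
    Tfam R p n m = Sum.elim
      (fun k : Fin p =>
        ∑ s ∈ powersetCard ((k : ℕ) + 1) (univ : Finset (Fin n)),
          ∏ i ∈ s, (X (Sum.inl i) : MvPolynomial (Fin n ⊕ Fin m) R))
      (fun k : Fin p =>
        ∑ s ∈ powersetCard ((k : ℕ) + 1) (univ : Finset (Fin m)),
          ∏ j ∈ s, (X (Sum.inr j) : MvPolynomial (Fin n ⊕ Fin m) R)) := by
  funext x
  cases x <;> simp [Tfam, esymm, map_sum, map_prod]

/-- `eVar p j` is the variable `X_{j-1}`, i.e. the placeholder for `esymm j`. -/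
def eVar (p j : ℕ) : MvPolynomial (Fin p) R :=
  if h : j - 1 < p then X ⟨j - 1, h⟩ else 0

lemma aeval_eVar {S : Type*} [CommRing S] [Algebra R S] {p j : ℕ} (h1 : 1 ≤ j) (h2 : j ≤ p)
    (g : Fin p → S) : aeval g (eVar R p j) = g ⟨j - 1, by omega⟩ := by
  rw [eVar, dif_pos (by omega : j - 1 < p), aeval_X]

lemma psum_universal (p : ℕ) :
    ∀ K, K ≤ p → ∃ N : ℕ → MvPolynomial (Fin p) ℚ,
      ∀ k, 1 ≤ k → k ≤ K → ∀ n : ℕ, p ≤ n →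
        psum (Fin n) ℚ k
          = aeval (fun j : Fin p => esymm (Fin n) ℚ ((j : ℕ) + 1)) (N k) := by
  intro K
  induction K with
  | zero => exact fun _ => ⟨fun _ => 0, fun k h1 h2 => absurd h2 (by omega)⟩
  | succ K ih =>
    intro hK
    obtain ⟨N, hN⟩ := ih (by omega)
    refine ⟨fun k => if k = K + 1 then
        (-1) ^ (K + 1 + 1) * ((K + 1 : ℕ) : MvPolynomial (Fin p) ℚ) * eVar ℚ p (K + 1)
          - ∑ a ∈ (antidiagonal (K + 1)).filter (fun a => a.1 ∈ Set.Ioo 0 (K + 1)),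
              (-1) ^ a.1 * eVar ℚ p a.1 * N a.2
      else N k, ?_⟩
    intro k h1 h2 n hn
    rcases Nat.lt_or_ge k (K + 1) with hlt | hge
    · dsimp only
      rw [if_neg (by omega)]
      exact hN k h1 (by omega) n hn
    · have hk : k = K + 1 := by omega
      subst hk
      dsimp only
      rw [if_pos rfl]
      rw [psum_eq_mul_esymm_sub_sum (Fin n) ℚ (K + 1) (by omega)]
      rw [map_sub, map_mul, map_mul, map_pow, map_neg, map_one, map_natCast,
        aeval_eVar ℚ h1 (by omega), map_sum]
      congr 1
      refine Finset.sum_congr rfl fun a ha => ?_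
      simp only [mem_filter, Finset.HasAntidiagonal.mem_antidiagonal, Set.mem_Ioo] at ha
      rw [map_mul, map_mul, map_pow, map_neg, map_one,
        aeval_eVar ℚ (by omega) (by omega : a.1 ≤ p)]
      rw [show ((⟨a.1 - 1, by omega⟩ : Fin p) : ℕ) + 1 = a.1 from by
        simp only [Fin.val_mk]; omega]
      rw [← hN a.2 (by omega) (by omega) n hn]

lemma prodSub_psum (n m k : ℕ) :
    prodSub R n m (psum (Fin n × Fin m) R k)
      = rename Sum.inl (psum (Fin n) R k) * rename Sum.inr (psum (Fin m) R k) := by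
  simp only [psum, map_sum, map_pow, rename_X, prodSub, aeval_X]
  rw [Finset.sum_mul_sum]
  rw [← Finset.univ_product_univ, Finset.sum_product]
  simp [mul_pow]


section PartA

lemma Epoly_universal (p : ℕ) :
    ∀ K, K ≤ p → ∃ q : ℕ → MvPolynomial (Fin p ⊕ Fin p) ℚ,
      ∀ k, k ≤ K → ∀ n m : ℕ, p ≤ n → p ≤ m →
        Epoly ℚ n m k = aeval (Tfam ℚ p n m) (q k) := by
  obtain ⟨N, hN⟩ := psum_universal p p le_rfl
  intro K
  induction K with
  | zero =>
    intro _
    refine ⟨fun _ => 1, fun k hk n m hn hm => ?_⟩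
    interval_cases k
    simp [Epoly, esymm_zero]
  | succ K ih =>
    intro hK
    obtain ⟨q, hq⟩ := ih (by omega)
    refine ⟨fun k => if k = K + 1 then
        C (((K + 1 : ℕ) : ℚ))⁻¹ * ((-1) ^ (K + 1 + 1) *
          ∑ a ∈ (antidiagonal (K + 1)).filter (fun a => a.1 < K + 1),
            (-1) ^ a.1 * q a.1 * (rename Sum.inl (N a.2) * rename Sum.inr (N a.2)))
      else q k, ?_⟩
    intro k hk n m hn hm
    rcases Nat.lt_or_ge k (K + 1) with hlt | hge
    · dsimp only
      rw [if_neg (by omega)]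
      exact hq k (by omega) n m hn hm
    · have hk' : k = K + 1 := by omega
      subst hk'
      dsimp only
      rw [if_pos rfl]
      have hT : ∀ j, 1 ≤ j → j ≤ p →
          aeval (Tfam ℚ p n m) (rename Sum.inl (N j) * rename Sum.inr (N j))
            = prodSub ℚ n m (psum (Fin n × Fin m) ℚ j) := by
        intro j h1 h2
        rw [prodSub_psum, map_mul, aeval_rename, aeval_rename]
        congr 1
        · rw [hN j h1 h2 n hn, comp_aeval_apply]
          congr 1
        · rw [hN j h1 h2 m hm, comp_aeval_apply]
          congr 1
      -- push `aeval (Tfam)` inside the definition of `q (K+1)`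
      rw [map_mul, map_mul, map_pow, map_neg, map_one, map_sum, aeval_C]
      have hsum : ∀ a ∈ (antidiagonal (K + 1)).filter (fun a => a.1 < K + 1),
          aeval (Tfam ℚ p n m) ((-1) ^ a.1 * q a.1 *
              (rename Sum.inl (N a.2) * rename Sum.inr (N a.2)))
            = (-1) ^ a.1 * prodSub ℚ n m (esymm (Fin n × Fin m) ℚ a.1)
                * prodSub ℚ n m (psum (Fin n × Fin m) ℚ a.2) := by
        intro a ha
        simp only [mem_filter, Finset.HasAntidiagonal.mem_antidiagonal] at ha
        rw [map_mul, map_mul, map_pow, map_neg, map_one,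
          hT a.2 (by omega) (by omega), ← hq a.1 (by omega) n m hn hm]
        rw [Epoly]
      rw [Finset.sum_congr rfl hsum]
      have newton := congrArg (prodSub ℚ n m) (mul_esymm_eq_sum (Fin n × Fin m) ℚ (K + 1))
      rw [map_mul, map_natCast, map_mul, map_pow, map_neg, map_one, map_sum] at newton
      simp only [map_mul, map_pow, map_neg, map_one] at newton
      rw [← Epoly] at newton
      -- newton : ↑(K+1) * Epoly = (-1)^(K+2) * Σ ...
      have hc : ((K + 1 : ℕ) : MvPolynomial (Fin n ⊕ Fin m) ℚ)
          = C ((K + 1 : ℕ) : ℚ) := by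
        rw [map_natCast (C : ℚ →+* MvPolynomial (Fin n ⊕ Fin m) ℚ)]
      rw [hc] at newton
      have hc0 : ((K + 1 : ℕ) : ℚ) ≠ 0 := by positivity
      calc Epoly ℚ n m (K + 1)
          = C (((K + 1 : ℕ) : ℚ))⁻¹ * (C ((K + 1 : ℕ) : ℚ) * Epoly ℚ n m (K + 1)) := by
            rw [← mul_assoc, ← map_mul, inv_mul_cancel₀ hc0, map_one, one_mul]
        _ = algebraMap ℚ _ (((K + 1 : ℕ) : ℚ))⁻¹ * ((-1) ^ (K + 1 + 1) *
              ∑ a ∈ (antidiagonal (K + 1)).filter (fun a => a.1 < K + 1),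
                (-1) ^ a.1 * prodSub ℚ n m (esymm (Fin n × Fin m) ℚ a.1)
                  * prodSub ℚ n m (psum (Fin n × Fin m) ℚ a.2)) := by
            rw [newton]; rfl

end PartA

section PartB

/-- Key intertwining: `sumAlgEquiv` carries `aeval (Tfam)` to evaluation at genuine
elementary symmetric polynomials over the coefficient ring. -/
lemma sumAlgEquiv_aeval_Tfam (p n m : ℕ) (w : MvPolynomial (Fin p ⊕ Fin p) R) :
    sumAlgEquiv R (Fin n) (Fin m) (aeval (Tfam R p n m) w)
      = aeval (Sum.elim
          (fun i : Fin p => esymm (Fin n) (MvPolynomial (Fin m) R) ((i : ℕ) + 1))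
          (fun i : Fin p => C (esymm (Fin m) R ((i : ℕ) + 1)))) w := by
  have hcomp : (sumAlgEquiv R (Fin n) (Fin m)).toAlgHom.comp (aeval (Tfam R p n m))
      = aeval (Sum.elim
          (fun i : Fin p => esymm (Fin n) (MvPolynomial (Fin m) R) ((i : ℕ) + 1))
          (fun i : Fin p => C (esymm (Fin m) R ((i : ℕ) + 1)))) := by
    apply algHom_ext
    rintro (i | j)
    · have h1 := AlgHom.congr_fun
        (sumAlgEquiv_comp_rename_inl (R := R) (S₁ := Fin n) (S₂ := Fin m))
        (esymm (Fin n) R ((i : ℕ) + 1))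
      simp only [AlgHom.comp_apply, aeval_X, Tfam, Sum.elim_inl, AlgEquiv.toAlgHom_eq_coe,
        AlgHom.coe_coe] at h1 ⊢
      rw [h1, ← AlgHom.coe_toRingHom, mapAlgHom_coe_ringHom, map_esymm]
    · have h1 := AlgHom.congr_fun
        (sumAlgEquiv_comp_rename_inr (R := R) (S₁ := Fin n) (S₂ := Fin m))
        (esymm (Fin m) R ((j : ℕ) + 1))
      simp only [AlgHom.comp_apply, aeval_X, Tfam, Sum.elim_inr, AlgEquiv.toAlgHom_eq_coe,
        AlgHom.coe_coe, IsScalarTower.coe_toAlgHom', algebraMap_eq] at h1 ⊢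
      rw [h1]
  exact AlgHom.congr_fun hcomp w

section Bisym

variable {R}

lemma mapAlgHom_rename_comp_sumAlgEquiv (p : ℕ) (τ : Equiv.Perm (Fin p)) :
    (mapAlgHom (rename ⇑τ : MvPolynomial (Fin p) R →ₐ[R] MvPolynomial (Fin p) R)).comp
        (sumAlgEquiv R (Fin p) (Fin p)).toAlgHom
      = (sumAlgEquiv R (Fin p) (Fin p)).toAlgHom.comp (rename (Sum.map id ⇑τ)) := by
  apply algHom_ext
  rintro (i | j) <;>
    simp [mapAlgHom_apply, sumToIter_Xl, sumToIter_Xr, rename_X]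

lemma rename_comp_sumAlgEquiv (p : ℕ) (ρ : Equiv.Perm (Fin p)) :
    ((rename ⇑ρ : MvPolynomial (Fin p) (MvPolynomial (Fin p) R)
          →ₐ[MvPolynomial (Fin p) R] _).restrictScalars R).comp
        (sumAlgEquiv R (Fin p) (Fin p)).toAlgHom
      = (sumAlgEquiv R (Fin p) (Fin p)).toAlgHom.comp (rename (Sum.map ⇑ρ id)) := by
  apply algHom_ext
  rintro (i | j) <;>
    simp [sumToIter_Xl, sumToIter_Xr]

lemma exists_preimage_of_bisym (p : ℕ) (f : MvPolynomial (Fin p ⊕ Fin p) R)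
    (hX : ∀ ρ : Equiv.Perm (Fin p), rename (Sum.map ⇑ρ id) f = f)
    (hY : ∀ ρ : Equiv.Perm (Fin p), rename (Sum.map id ⇑ρ) f = f) :
    ∃ Q : MvPolynomial (Fin p ⊕ Fin p) R, aeval (Tfam R p p p) Q = f := by
  classical
  set A := MvPolynomial (Fin p) R with hA
  set ψ := sumAlgEquiv R (Fin p) (Fin p) with hψ
  -- the image of `f` is symmetric in the outer variables
  have hsym1 : IsSymmetric (ψ f) := by
    intro ρ
    have h1 := AlgHom.congr_fun (rename_comp_sumAlgEquiv (R := R) p ρ) f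
    simp only [AlgHom.comp_apply, AlgHom.coe_restrictScalars', AlgEquiv.toAlgHom_eq_coe,
      AlgHom.coe_coe] at h1
    rw [hX ρ] at h1
    exact h1
  -- write it as a polynomial in the esymm of the outer variables
  obtain ⟨g, hg⟩ := esymmAlgHom_fin_surjective (R := A) (le_refl p) ⟨ψ f, hsym1⟩
  have hg' : aeval (fun i : Fin p => esymm (Fin p) A ((i : ℕ) + 1)) g = ψ f := by
    have := congrArg Subtype.val hg
    rwa [esymmAlgHom_apply] at this
  -- the coefficients of `g` are invariant under permutations of the inner variables
  have hmapsym : ∀ τ : Equiv.Perm (Fin p),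
      map ((rename ⇑τ : A →ₐ[R] A) : A →+* A) g = g := by
    intro τ
    have h1 : map ((rename ⇑τ : A →ₐ[R] A) : A →+* A) (ψ f) = ψ f := by
      have h2 := AlgHom.congr_fun (mapAlgHom_rename_comp_sumAlgEquiv (R := R) p τ) f
      simp only [AlgHom.comp_apply, AlgEquiv.toAlgHom_eq_coe, AlgHom.coe_coe] at h2
      rw [hY τ] at h2
      rw [← AlgHom.coe_toRingHom, mapAlgHom_coe_ringHom] at h2
      exact h2
    -- commute `map` with evaluation at esymm
    have h3 : (mapAlgHom (rename ⇑τ : A →ₐ[R] A)).comp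
          ((aeval (fun i : Fin p => esymm (Fin p) A ((i : ℕ) + 1))
              : MvPolynomial (Fin p) A →ₐ[A] MvPolynomial (Fin p) A).restrictScalars R)
        = ((aeval (fun i : Fin p => esymm (Fin p) A ((i : ℕ) + 1))
              : MvPolynomial (Fin p) A →ₐ[A] MvPolynomial (Fin p) A).restrictScalars R).comp
            (mapAlgHom (rename ⇑τ : A →ₐ[R] A)) := by
      apply algHom_ext'
      · apply algHom_ext
        intro j
        simp [mapAlgHom_apply, algebraMap_eq]
        rw [IsScalarTower.toAlgHom_apply]
        simp [algebraMap_eq, rename_X]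
      · intro i
        simp only [AlgHom.comp_apply, AlgHom.coe_restrictScalars', aeval_X]
        rw [← AlgHom.coe_toRingHom, mapAlgHom_coe_ringHom, map_esymm, map_X, aeval_X]
    have h4 := AlgHom.congr_fun h3 g
    simp only [AlgHom.comp_apply, AlgHom.coe_restrictScalars'] at h4
    rw [← AlgHom.coe_toRingHom, mapAlgHom_coe_ringHom] at h4
    -- h4 : map rτ (aeval es g) = aeval es (map rτ g)
    have h5 : aeval (fun i : Fin p => esymm (Fin p) A ((i : ℕ) + 1))
        (map ((rename ⇑τ : A →ₐ[R] A) : A →+* A) g) = ψ f := by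
      rw [← h4, hg', h1]
    have hinj := esymmAlgHom_fin_injective (R := A) (n := p) (m := p) (le_refl p)
    apply hinj
    apply Subtype.ext
    rw [esymmAlgHom_apply, esymmAlgHom_apply, h5, hg']
  -- each coefficient of `g` is a symmetric polynomial
  have hcoef : ∀ d : Fin p →₀ ℕ, IsSymmetric (coeff d g) := by
    intro d τ
    conv_rhs => rw [← hmapsym τ]
    rw [coeff_map]
    rfl
  have hsurj : ∀ d : Fin p →₀ ℕ, ∃ h : MvPolynomial (Fin p) R,
      aeval (fun i : Fin p => esymm (Fin p) R ((i : ℕ) + 1)) h = coeff d g := by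
    intro d
    obtain ⟨h, hh⟩ := esymmAlgHom_fin_surjective (R := R) (le_refl p) ⟨coeff d g, hcoef d⟩
    refine ⟨h, ?_⟩
    have := congrArg Subtype.val hh
    rwa [esymmAlgHom_apply] at this
  choose h hh using hsurj
  refine ⟨∑ d ∈ g.support, rename Sum.inr (h d) * monomial (d.mapDomain Sum.inl) 1, ?_⟩
  apply ψ.injective
  rw [sumAlgEquiv_aeval_Tfam, ← hg', map_sum]
  have term : ∀ d ∈ g.support,
      aeval (Sum.elim
          (fun i : Fin p => esymm (Fin p) A ((i : ℕ) + 1))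
          (fun i : Fin p => C (esymm (Fin p) R ((i : ℕ) + 1))))
        (rename Sum.inr (h d) * monomial (d.mapDomain Sum.inl) 1)
      = aeval (fun i : Fin p => esymm (Fin p) A ((i : ℕ) + 1))
          (monomial d (coeff d g)) := by
    intro d _
    rw [map_mul]
    have f1 : aeval (Sum.elim
          (fun i : Fin p => esymm (Fin p) A ((i : ℕ) + 1))
          (fun i : Fin p => C (esymm (Fin p) R ((i : ℕ) + 1))))
        (rename Sum.inr (h d)) = C (coeff d g) := by
      rw [aeval_rename, Sum.elim_comp_inr]
      have hc : (IsScalarTower.toAlgHom R A (MvPolynomial (Fin p) A)).comp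
            (aeval (fun i : Fin p => esymm (Fin p) R ((i : ℕ) + 1)))
          = aeval (fun i : Fin p => (C (esymm (Fin p) R ((i : ℕ) + 1))
              : MvPolynomial (Fin p) A)) := by
        rw [comp_aeval]
        rfl
      have := AlgHom.congr_fun hc (h d)
      simp only [AlgHom.comp_apply, IsScalarTower.coe_toAlgHom'] at this
      rw [← this, hh d, algebraMap_eq]
    have f2 : aeval (Sum.elim
          (fun i : Fin p => esymm (Fin p) A ((i : ℕ) + 1))
          (fun i : Fin p => C (esymm (Fin p) R ((i : ℕ) + 1))))
        ((monomial (d.mapDomain Sum.inl)) (1 : R))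
      = d.prod fun i k => (esymm (Fin p) A ((i : ℕ) + 1)) ^ k := by
      rw [← rename_monomial, aeval_rename, Sum.elim_comp_inl, aeval_monomial, map_one, one_mul]
    rw [f1, f2, aeval_monomial, algebraMap_eq]
  rw [Finset.sum_congr rfl term, ← map_sum, support_sum_monomial_coeff]


end Bisym

end PartB

section PartC

lemma aeval_esymm_injective (S : Type*) [CommRing S] (p : ℕ) :
    Function.Injective (aeval (fun i : Fin p => esymm (Fin p) S ((i : ℕ) + 1))
      : MvPolynomial (Fin p) S → MvPolynomial (Fin p) S) := by
  intro x y hxy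
  apply esymmAlgHom_fin_injective (R := S) (n := p) (m := p) le_rfl
  apply Subtype.ext
  rw [esymmAlgHom_apply, esymmAlgHom_apply]
  exact hxy

lemma aeval_Tfam_pp_injective (p : ℕ) :
    Function.Injective (aeval (Tfam ℚ p p p) : MvPolynomial (Fin p ⊕ Fin p) ℚ → _) := by
  intro a b hab
  have h1 : aeval (Sum.elim
        (fun i : Fin p => esymm (Fin p) (MvPolynomial (Fin p) ℚ) ((i : ℕ) + 1))
        (fun i : Fin p => C (esymm (Fin p) ℚ ((i : ℕ) + 1)))) a
      = aeval (Sum.elim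
        (fun i : Fin p => esymm (Fin p) (MvPolynomial (Fin p) ℚ) ((i : ℕ) + 1))
        (fun i : Fin p => C (esymm (Fin p) ℚ ((i : ℕ) + 1)))) b := by
    rw [← sumAlgEquiv_aeval_Tfam, ← sumAlgEquiv_aeval_Tfam, hab]
  have hfac : ((aeval (fun i : Fin p => esymm (Fin p) (MvPolynomial (Fin p) ℚ) ((i : ℕ) + 1))
        : MvPolynomial (Fin p) (MvPolynomial (Fin p) ℚ)
          →ₐ[MvPolynomial (Fin p) ℚ] _).restrictScalars ℚ).comp
      ((mapAlgHom ((aeval (fun i : Fin p => esymm (Fin p) ℚ ((i : ℕ) + 1)))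
          : MvPolynomial (Fin p) ℚ →ₐ[ℚ] MvPolynomial (Fin p) ℚ)).comp
        (sumAlgEquiv ℚ (Fin p) (Fin p)).toAlgHom)
      = aeval (Sum.elim
          (fun i : Fin p => esymm (Fin p) (MvPolynomial (Fin p) ℚ) ((i : ℕ) + 1))
          (fun i : Fin p => C (esymm (Fin p) ℚ ((i : ℕ) + 1)))) := by
    apply algHom_ext
    rintro (i | j)
    · simp [mapAlgHom_apply, sumToIter_Xl]
    · simp [mapAlgHom_apply, sumToIter_Xr, algebraMap_eq]
  rw [← AlgHom.congr_fun hfac a, ← AlgHom.congr_fun hfac b] at h1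
  simp only [AlgHom.comp_apply, AlgHom.coe_restrictScalars', AlgEquiv.toAlgHom_eq_coe,
    AlgHom.coe_coe] at h1
  have h2 := aeval_esymm_injective (MvPolynomial (Fin p) ℚ) p h1
  have hminj : Function.Injective
      ⇑(mapAlgHom ((aeval (fun i : Fin p => esymm (Fin p) ℚ ((i : ℕ) + 1)))
          : MvPolynomial (Fin p) ℚ →ₐ[ℚ] MvPolynomial (Fin p) ℚ)
        : MvPolynomial (Fin p) (MvPolynomial (Fin p) ℚ)
          →ₐ[ℚ] MvPolynomial (Fin p) (MvPolynomial (Fin p) ℚ)) := by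
    rw [← AlgHom.coe_toRingHom, mapAlgHom_coe_ringHom]
    exact map_injective _ (aeval_esymm_injective ℚ p)
  exact (sumAlgEquiv ℚ (Fin p) (Fin p)).injective (hminj h2)

end PartC

section PartD

lemma Epoly_symmL (n m k : ℕ) (ρ : Equiv.Perm (Fin n)) :
    rename (Sum.map ⇑ρ id) (Epoly R n m k) = Epoly R n m k := by
  have hcomp : (rename (Sum.map ⇑ρ id)
        : MvPolynomial (Fin n ⊕ Fin m) R →ₐ[R] _).comp (prodSub R n m)
      = (prodSub R n m).comp (rename ⇑(ρ.prodCongr (Equiv.refl (Fin m)))) := by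
    apply algHom_ext
    intro v
    simp [prodSub, rename_X, Equiv.prodCongr, Prod.map]
  have h1 := AlgHom.congr_fun hcomp (esymm (Fin n × Fin m) R k)
  simp only [AlgHom.comp_apply] at h1
  rw [Epoly, h1, rename_esymm]

lemma Epoly_symmR (n m k : ℕ) (ρ : Equiv.Perm (Fin m)) :
    rename (Sum.map id ⇑ρ) (Epoly R n m k) = Epoly R n m k := by
  have hcomp : (rename (Sum.map id ⇑ρ)
        : MvPolynomial (Fin n ⊕ Fin m) R →ₐ[R] _).comp (prodSub R n m)
      = (prodSub R n m).comp (rename ⇑((Equiv.refl (Fin n)).prodCongr ρ)) := by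
    apply algHom_ext
    intro v
    simp [prodSub, rename_X, Equiv.prodCongr, Prod.map]
  have h1 := AlgHom.congr_fun hcomp (esymm (Fin n × Fin m) R k)
  simp only [AlgHom.comp_apply] at h1
  rw [Epoly, h1, rename_esymm]

lemma map_Tfam (p n m : ℕ) (v : Fin p ⊕ Fin p) :
    map (Int.castRingHom ℚ) (Tfam ℤ p n m v) = Tfam ℚ p n m v := by
  cases v <;> simp [Tfam, map_rename, map_esymm]

lemma map_Epoly (n m k : ℕ) :
    map (Int.castRingHom ℚ) (Epoly ℤ n m k) = Epoly ℚ n m k := by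
  rw [Epoly_eq, Epoly_eq]
  simp [map_sum, map_prod]

lemma map_aeval_Tfam (p n m : ℕ) (Q : MvPolynomial (Fin p ⊕ Fin p) ℤ) :
    map (Int.castRingHom ℚ) (aeval (Tfam ℤ p n m) Q)
      = aeval (Tfam ℚ p n m) (map (Int.castRingHom ℚ) Q) := by
  rw [map_aeval]
  rw [show (aeval (Tfam ℚ p n m) (map (Int.castRingHom ℚ) Q))
      = eval₂Hom (algebraMap ℚ _) (Tfam ℚ p n m) (map (Int.castRingHom ℚ) Q) from rfl]
  rw [eval₂Hom_map_hom]
  have hring : ((map (Int.castRingHom ℚ)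
        : MvPolynomial (Fin n ⊕ Fin m) ℤ →+* MvPolynomial (Fin n ⊕ Fin m) ℚ)).comp
        (algebraMap ℤ (MvPolynomial (Fin n ⊕ Fin m) ℤ))
      = (algebraMap ℚ (MvPolynomial (Fin n ⊕ Fin m) ℚ)).comp (Int.castRingHom ℚ) := by
    ext z
    simp
  rw [hring]
  have hfun : (fun i => (MvPolynomial.map (Int.castRingHom ℚ)) (Tfam ℤ p n m i))
      = Tfam ℚ p n m := funext (map_Tfam p n m)
  rw [hfun]

end PartD

/-- **Universal polynomial for the elementary symmetric functions of the products
`Xᵢ·Yⱼ`.** Fix `p ≥ 1`. There is a polynomial `Q_p ∈ ℤ[X₁,…,X_p,Y₁,…,Y_p]`,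
independent of `n` and `m`, such that for all `n, m ≥ p` the `p`-th elementary
symmetric polynomial of the `n·m` products `Xᵢ·Yⱼ` equals `Q_p` evaluated at
`(e₁(X),…,e_p(X), e₁(Y),…,e_p(Y))`. -/
theorem esymm_prod_eq_universal_poly (p : ℕ) (hp : 1 ≤ p) :
    ∃ Q : MvPolynomial (Fin p ⊕ Fin p) ℤ,
      ∀ n m : ℕ, p ≤ n → p ≤ m →
        (∑ s ∈ powersetCard p (univ : Finset (Fin n × Fin m)),
            ∏ ij ∈ s, (X (Sum.inl ij.1) * X (Sum.inr ij.2)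
              : MvPolynomial (Fin n ⊕ Fin m) ℤ)) =
          MvPolynomial.aeval
            (Sum.elim
              (fun k : Fin p =>
                ∑ s ∈ powersetCard ((k : ℕ) + 1) (univ : Finset (Fin n)),
                  ∏ i ∈ s, (X (Sum.inl i) : MvPolynomial (Fin n ⊕ Fin m) ℤ))
              (fun k : Fin p =>
                ∑ s ∈ powersetCard ((k : ℕ) + 1) (univ : Finset (Fin m)),
                  ∏ j ∈ s, (X (Sum.inr j) : MvPolynomial (Fin n ⊕ Fin m) ℤ))) Q := by
  obtain ⟨qq, hqq⟩ := Epoly_universal p p le_rfl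
  obtain ⟨Qz, hQz⟩ := exists_preimage_of_bisym p (Epoly ℤ p p p)
    (fun ρ => Epoly_symmL ℤ p p p ρ) (fun ρ => Epoly_symmR ℤ p p p ρ)
  refine ⟨Qz, ?_⟩
  intro n m hn hm
  rw [← Epoly_eq, ← Tfam_eq]
  apply map_injective (Int.castRingHom ℚ) Int.cast_injective
  rw [map_Epoly, map_aeval_Tfam]
  have hmapQ : map (Int.castRingHom ℚ) Qz = qq p := by
    apply aeval_Tfam_pp_injective p
    rw [← map_aeval_Tfam, hQz, map_Epoly]
    exact hqq p le_rfl p p le_rfl le_rfl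
  rw [hmapQ]
  exact hqq p le_rfl n m hn hm

end EsymmProdUniversal
end

section
/- For all f, g ∈ 𝒜 and a ∈ A: f(aX) ⋆ g(X) = f(X) ⋆ g(aX) = (f ⋆ g)(aX). In particular, (1 − aX) ⋆ f(X) = f(aX). -/
open PowerSeries

/-- Formal exponential: for `F` with zero constant coefficient this is
`exp F = ∑ F^k / k!` (each coefficient is a finite sum). -/
noncomputable def pexp {A : Type*} [CommRing A] [Algebra ℚ A] (F : PowerSeries A) :
    PowerSeries A :=
  PowerSeries.mk fun n =>
    ∑ k ∈ Finset.range (n + 1), ((k.factorial : ℚ)⁻¹) • (PowerSeries.coeff n (F ^ k))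

/-- Formal logarithm: for `f` with constant coefficient `1` this is
`log f = ∑_{k≥1} (-1)^{k+1} (f-1)^k / k`; it is the inverse bijection of `pexp`
between `X·A[[X]]` and `𝒜 = 1 + X·A[[X]]`. -/
noncomputable def plog {A : Type*} [CommRing A] [Algebra ℚ A] (f : PowerSeries A) :
    PowerSeries A :=
  PowerSeries.mk fun n =>
    if n = 0 then 0 else
      ∑ k ∈ Finset.range (n + 1), (((-1 : ℚ) ^ (k + 1)) / k) • (PowerSeries.coeff n ((f - 1) ^ k))

/-- The eñe product: if `f = exp (∑_{i≥1} Fᵢ Xⁱ)` and `g = exp (∑_{i≥1} Gᵢ Xⁱ)` then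
`f ⋆ g = exp (−∑_{i≥1} i·Fᵢ·Gᵢ·Xⁱ)`. -/
noncomputable def ene {A : Type*} [CommRing A] [Algebra ℚ A] (f g : PowerSeries A) :
    PowerSeries A :=
  pexp (PowerSeries.mk fun i =>
    -(i : A) * (PowerSeries.coeff i (plog f)) * (PowerSeries.coeff i (plog g)))

namespace EneAux

open Finset

variable {A : Type*} [CommRing A] [Algebra ℚ A]

lemma inv_smul_nat_mul {n : ℕ} (hn : n ≠ 0) (x : A) :
    ((n : ℚ)⁻¹) • ((n : A) * x) = x := by
  have h1 : (n : A) * x = (n : ℕ) • x := (nsmul_eq_mul n x).symm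
  rw [h1, ← Nat.cast_smul_eq_nsmul ℚ n x, smul_smul,
    inv_mul_cancel₀ (by exact_mod_cast hn), one_smul]

lemma coeff_pow_mul_eq_zero {F y : PowerSeries A} (hF : constantCoeff F = 0)
    {n k : ℕ} (h : n < k) : PowerSeries.coeff n (F ^ k * y) = 0 := by
  have hX : (X : PowerSeries A) ∣ F := X_dvd_iff.mpr hF
  have hd : (X : PowerSeries A) ^ k ∣ F ^ k * y :=
    Dvd.dvd.mul_right (pow_dvd_pow_of_dvd hX k) y
  exact (X_pow_dvd_iff.mp hd) n h

lemma coeff_pow_eq_zero {F : PowerSeries A} (hF : constantCoeff F = 0)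
    {n k : ℕ} (h : n < k) : PowerSeries.coeff n (F ^ k) = 0 := by
  simpa using coeff_pow_mul_eq_zero (y := 1) hF h

/-- Truncated exponential as an honest (finite) sum of power series. -/
noncomputable def Eser (F : PowerSeries A) (N : ℕ) : PowerSeries A :=
  ∑ k ∈ range N, ((k.factorial : ℚ)⁻¹) • F ^ k

lemma coeff_Eser (F : PowerSeries A) (N n : ℕ) :
    PowerSeries.coeff n (Eser F N) =
      ∑ k ∈ range N, ((k.factorial : ℚ)⁻¹) • PowerSeries.coeff n (F ^ k) := by
  rw [Eser, map_sum]
  simp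

lemma coeff_pexp (F : PowerSeries A) (n : ℕ) :
    PowerSeries.coeff n (pexp F) =
      ∑ k ∈ range (n + 1), ((k.factorial : ℚ)⁻¹) • PowerSeries.coeff n (F ^ k) := by
  rw [pexp, coeff_mk]

lemma coeff_pexp_eq_Eser {F : PowerSeries A} (hF : constantCoeff F = 0)
    {n N : ℕ} (h : n < N) :
    PowerSeries.coeff n (pexp F) = PowerSeries.coeff n (Eser F N) := by
  rw [coeff_pexp, coeff_Eser]
  refine Finset.sum_subset (by intro k hk; simp at hk ⊢; omega) ?_
  intro k hk hk'
  simp only [mem_range] at hk hk'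
  rw [coeff_pow_eq_zero hF (by omega), smul_zero]

lemma derivative_qsmul (q : ℚ) (f : PowerSeries A) :
    d⁄dX A (q • f) = q • d⁄dX A f := by
  ext n
  rw [coeff_derivative, coeff_smul, coeff_smul, coeff_derivative, smul_mul_assoc]

lemma derivative_Eser (F : PowerSeries A) (N : ℕ) :
    d⁄dX A (Eser F (N + 1)) = d⁄dX A F * Eser F N := by
  rw [Eser, map_sum]
  rw [Finset.sum_range_succ']
  have h0 : d⁄dX A (((Nat.factorial 0 : ℚ)⁻¹) • F ^ 0) = 0 := by
    simp [derivative_qsmul]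
  rw [h0, add_zero]
  have hterm : ∀ i : ℕ,
      d⁄dX A ((((i + 1).factorial : ℚ)⁻¹) • F ^ (i + 1)) =
        ((i.factorial : ℚ)⁻¹) • (F ^ i * d⁄dX A F) := by
    intro i
    rw [derivative_qsmul, Derivation.leibniz_pow]
    simp only [Nat.add_sub_cancel, smul_eq_mul]
    rw [← Nat.cast_smul_eq_nsmul ℚ (i + 1), smul_smul]
    congr 1
    rw [Nat.factorial_succ]
    push_cast
    rw [mul_comm]
    field_simp
  rw [Finset.sum_congr rfl fun i _ => hterm i]
  rw [Eser, Finset.mul_sum]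
  refine Finset.sum_congr rfl fun i _ => ?_
  rw [mul_smul_comm, mul_comm]

lemma coeff_mul_congr {y z : PowerSeries A} (x : PowerSeries A) {n : ℕ}
    (h : ∀ q ≤ n, PowerSeries.coeff q y = PowerSeries.coeff q z) :
    PowerSeries.coeff n (x * y) = PowerSeries.coeff n (x * z) := by
  rw [coeff_mul, coeff_mul]
  refine Finset.sum_congr rfl fun p hp => ?_
  rw [Finset.HasAntidiagonal.mem_antidiagonal] at hp
  rw [h p.2 (by omega)]

lemma derivative_pexp {F : PowerSeries A} (hF : constantCoeff F = 0) :
    d⁄dX A (pexp F) = d⁄dX A F * pexp F := by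
  ext n
  have h1 : PowerSeries.coeff n (d⁄dX A (pexp F)) =
      PowerSeries.coeff n (d⁄dX A (Eser F (n + 2))) := by
    rw [coeff_derivative, coeff_derivative, coeff_pexp_eq_Eser (N := n + 2) hF (by omega)]
  rw [h1, derivative_Eser]
  exact (coeff_mul_congr (n := n) _ fun q hq => (coeff_pexp_eq_Eser (n := q) (N := n + 1) hF (by omega)).symm)

/-- Truncated logarithm as an honest (finite) sum of power series. -/
noncomputable def Lser (u : PowerSeries A) (N : ℕ) : PowerSeries A :=
  ∑ k ∈ range N, ((((-1 : ℚ) ^ (k + 1)) / k)) • u ^ k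

lemma coeff_Lser (u : PowerSeries A) (N n : ℕ) :
    PowerSeries.coeff n (Lser u N) =
      ∑ k ∈ range N, ((((-1 : ℚ) ^ (k + 1)) / k)) • PowerSeries.coeff n (u ^ k) := by
  rw [Lser, map_sum]
  simp

lemma coeff_plog_eq_Lser {h : PowerSeries A} (hh : constantCoeff h = 1)
    {n N : ℕ} (hn : n < N) :
    PowerSeries.coeff n (plog h) = PowerSeries.coeff n (Lser (h - 1) N) := by
  have hu : constantCoeff (h - 1) = 0 := by simp [hh]
  rw [plog, coeff_mk, coeff_Lser]
  by_cases h0 : n = 0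
  · subst h0
    simp only [if_true]
    symm
    refine Finset.sum_eq_zero fun k hk => ?_
    rcases Nat.eq_zero_or_pos k with hk0 | hk0
    · subst hk0; simp
    · rw [coeff_zero_eq_constantCoeff, map_pow, hu, zero_pow (by omega), smul_zero]
  · rw [if_neg h0]
    refine Finset.sum_subset (by intro k hk; simp at hk ⊢; omega) ?_
    intro k hk hk'
    simp only [mem_range] at hk hk'
    rw [coeff_pow_eq_zero hu (by omega), smul_zero]

lemma derivative_Lser (u : PowerSeries A) (N : ℕ) :
    d⁄dX A (Lser u (N + 1)) = (∑ i ∈ range N, (-u) ^ i) * d⁄dX A u := by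
  rw [Lser, map_sum, Finset.sum_range_succ']
  have h0 : d⁄dX A ((((-1 : ℚ) ^ (0 + 1)) / (0 : ℕ)) • u ^ 0) = 0 := by
    simp [derivative_qsmul]
  rw [h0, add_zero, Finset.sum_mul]
  refine Finset.sum_congr rfl fun i _ => ?_
  rw [derivative_qsmul, Derivation.leibniz_pow]
  simp only [Nat.add_sub_cancel, smul_smul]
  rw [← Nat.cast_smul_eq_nsmul ℚ (i + 1), smul_smul]
  have hsc : ((-1 : ℚ) ^ (i + 1 + 1)) / ((i + 1 : ℕ) : ℚ) * ((i + 1 : ℕ) : ℚ)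
      = (-1 : ℚ) ^ i := by
    have : ((i + 1 : ℕ) : ℚ) ≠ 0 := by positivity
    field_simp
    ring
  rw [hsc, smul_eq_mul]
  rw [Algebra.smul_def, map_pow, map_neg, map_one]
  rw [neg_pow, neg_pow]
  ring

lemma mul_derivative_plog {h : PowerSeries A} (hh : constantCoeff h = 1) :
    h * d⁄dX A (plog h) = d⁄dX A h := by
  set u : PowerSeries A := h - 1 with hu_def
  have hu : constantCoeff u = 0 := by simp [hu_def, hh]
  ext n
  have hcoe : ∀ q ≤ n, PowerSeries.coeff q (d⁄dX A (plog h)) =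
      PowerSeries.coeff q (d⁄dX A (Lser u (n + 2))) := by
    intro q hq
    rw [coeff_derivative, coeff_derivative, coeff_plog_eq_Lser (N := n + 2) hh (by omega)]
  rw [coeff_mul_congr h hcoe, derivative_Lser]
  have hgeom : h * ((∑ i ∈ range (n + 1), (-u) ^ i) * d⁄dX A u)
      = d⁄dX A u - (-u) ^ (n + 1) * d⁄dX A u := by
    have hg := geom_sum_mul (-u) (n + 1)
    have h1 : h = -((-u) - 1) := by rw [hu_def]; ring
    calc h * ((∑ i ∈ range (n + 1), (-u) ^ i) * d⁄dX A u)
        = -(((∑ i ∈ range (n + 1), (-u) ^ i) * ((-u) - 1)) * d⁄dX A u) := by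
          rw [h1]; ring
      _ = -(((-u) ^ (n + 1) - 1) * d⁄dX A u) := by rw [hg]
      _ = d⁄dX A u - (-u) ^ (n + 1) * d⁄dX A u := by ring
  rw [hgeom, map_sub]
  have hz : PowerSeries.coeff n ((-u) ^ (n + 1) * d⁄dX A u) = 0 :=
    coeff_pow_mul_eq_zero (by simp [hu]) (by omega)
  have hdu : d⁄dX A u = d⁄dX A h := by
    rw [hu_def, map_sub]
    simp
  rw [hz, sub_zero, hdu]

lemma ode_unique {q y z : PowerSeries A}
    (h0 : constantCoeff y = constantCoeff z)
    (hy : d⁄dX A y = q * y) (hz : d⁄dX A z = q * z) : y = z := by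
  ext n
  induction n using Nat.strong_induction_on with
  | _ n ih =>
    match n with
    | 0 => simpa using h0
    | Nat.succ m =>
      have hcy : PowerSeries.coeff m (d⁄dX A y) = PowerSeries.coeff m (d⁄dX A z) := by
        rw [hy, hz]
        exact coeff_mul_congr q fun p hp => ih p (by omega)
      rw [coeff_derivative, coeff_derivative] at hcy
      have := congrArg (fun x => ((m + 1 : ℚ)⁻¹) • x) hcy
      have hm : ((m + 1 : ℕ) : ℚ) = (m : ℚ) + 1 := by push_cast; ring
      calc PowerSeries.coeff (m + 1) y
          = ((m + 1 : ℕ) : ℚ)⁻¹ • (((m + 1 : ℕ) : A) * PowerSeries.coeff (m + 1) y) :=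
            (inv_smul_nat_mul (by omega) _).symm
        _ = ((m + 1 : ℕ) : ℚ)⁻¹ • (((m + 1 : ℕ) : A) * PowerSeries.coeff (m + 1) z) := by
            rw [mul_comm ((m + 1 : ℕ) : A)]
            push_cast
            rw [this]
            push_cast
            ring_nf
        _ = PowerSeries.coeff (m + 1) z := inv_smul_nat_mul (by omega) _

lemma constantCoeff_pexp (F : PowerSeries A) : constantCoeff (pexp F) = 1 := by
  rw [← coeff_zero_eq_constantCoeff, coeff_pexp]
  simp

lemma constantCoeff_plog (f : PowerSeries A) : constantCoeff (plog f) = 0 := by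
  rw [← coeff_zero_eq_constantCoeff, plog, coeff_mk, if_pos rfl]

lemma pexp_plog {h : PowerSeries A} (hh : constantCoeff h = 1) :
    pexp (plog h) = h := by
  refine ode_unique (q := d⁄dX A (plog h)) ?_ ?_ ?_
  · rw [constantCoeff_pexp, hh]
  · exact derivative_pexp (constantCoeff_plog h)
  · rw [mul_comm]
    exact (mul_derivative_plog hh).symm

lemma plog_rescale (a : A) (f : PowerSeries A) :
    plog (PowerSeries.rescale a f) = PowerSeries.rescale a (plog f) := by
  ext n
  rw [coeff_rescale, plog, plog, coeff_mk, coeff_mk]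
  by_cases h0 : n = 0
  · simp [h0]
  · rw [if_neg h0, if_neg h0, Finset.mul_sum]
    refine Finset.sum_congr rfl fun k _ => ?_
    have : PowerSeries.rescale a f - 1 = PowerSeries.rescale a (f - 1) := by
      rw [map_sub, map_one]
    rw [this, ← map_pow, coeff_rescale, mul_smul_comm]

lemma pexp_rescale (a : A) (F : PowerSeries A) :
    pexp (PowerSeries.rescale a F) = PowerSeries.rescale a (pexp F) := by
  ext n
  rw [coeff_rescale, coeff_pexp, coeff_pexp, Finset.mul_sum]
  refine Finset.sum_congr rfl fun k _ => ?_
  rw [← map_pow, coeff_rescale, mul_smul_comm]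

lemma coeff_plog_one_sub (a : A) {n : ℕ} (hn : n ≠ 0) :
    PowerSeries.coeff n (plog (1 - PowerSeries.C a * PowerSeries.X))
      = -(((n : ℚ)⁻¹) • a ^ n) := by
  rw [plog, coeff_mk, if_neg hn]
  have hsub : (1 - PowerSeries.C a * PowerSeries.X) - 1
      = PowerSeries.C (-a) * PowerSeries.X := by
    rw [map_neg]; ring
  have hterm : ∀ k, PowerSeries.coeff n
      (((1 - PowerSeries.C a * PowerSeries.X) - 1) ^ k)
      = (-a) ^ k * (if n = k then 1 else 0) := by
    intro k
    rw [hsub, mul_pow, ← map_pow, coeff_C_mul, coeff_X_pow]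
  rw [Finset.sum_congr rfl fun k _ => by rw [hterm k]]
  rw [Finset.sum_eq_single n]
  · rw [if_pos rfl, mul_one]
    have key : ∀ x : A, ((-1 : ℚ) ^ n) • x = (-1 : A) ^ n * x := fun x => by
      rw [Algebra.smul_def, map_pow, map_neg, map_one]
    rw [neg_pow a, ← key (a ^ n), smul_smul]
    have h2 : ((-1 : ℚ) ^ (n + 1)) * (-1 : ℚ) ^ n = -1 := by
      rw [← pow_add]
      have h3 : n + 1 + n = 2 * n + 1 := by omega
      rw [h3, pow_succ, pow_mul]
      norm_num
    have h4 : ((-1 : ℚ) ^ (n + 1)) / (n : ℚ) * (-1 : ℚ) ^ n = -((n : ℚ)⁻¹) := by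
      rw [div_mul_eq_mul_div, h2, neg_div, one_div]
    rw [h4, neg_smul]
  · intro b hb hbn
    rw [if_neg (fun h => hbn h.symm)]
    simp
  · intro hnn
    exact absurd (Finset.self_mem_range_succ n) hnn

end EneAux

/-- For `f, g ∈ 𝒜` and `a ∈ A`: `f(aX) ⋆ g(X) = f(X) ⋆ g(aX) = (f ⋆ g)(aX)`,
and in particular `(1 − aX) ⋆ f(X) = f(aX)`, where `f(aX)` is `rescale a f`. -/
theorem ene_rescale {A : Type*} [CommRing A] [Algebra ℚ A]
    (f g : PowerSeries A)
    (hf : PowerSeries.constantCoeff f = 1)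
    (hg : PowerSeries.constantCoeff g = 1)
    (a : A) :
    ene (PowerSeries.rescale a f) g = ene f (PowerSeries.rescale a g) ∧
    ene (PowerSeries.rescale a f) g = PowerSeries.rescale a (ene f g) ∧
    ene (1 - PowerSeries.C a * PowerSeries.X) f = PowerSeries.rescale a f := by
  have hfa : PowerSeries.constantCoeff (PowerSeries.rescale a f) = 1 := by
    rw [← PowerSeries.coeff_zero_eq_constantCoeff_apply, PowerSeries.coeff_rescale, pow_zero,
      one_mul, PowerSeries.coeff_zero_eq_constantCoeff_apply, hf]
  refine ⟨?_, ?_, ?_⟩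
  · unfold ene
    refine congrArg pexp ?_
    ext i
    rw [PowerSeries.coeff_mk, PowerSeries.coeff_mk, EneAux.plog_rescale, EneAux.plog_rescale,
      PowerSeries.coeff_rescale, PowerSeries.coeff_rescale]
    ring
  · unfold ene
    rw [← EneAux.pexp_rescale, PowerSeries.rescale_mk]
    refine congrArg pexp ?_
    ext i
    rw [PowerSeries.coeff_mk, PowerSeries.coeff_mk, EneAux.plog_rescale,
      PowerSeries.coeff_rescale]
    ring
  · unfold ene
    have key : (PowerSeries.mk fun i => -(i : A) *
        PowerSeries.coeff i (plog (1 - PowerSeries.C a * PowerSeries.X)) *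
        PowerSeries.coeff i (plog f)) = plog (PowerSeries.rescale a f) := by
      ext i
      rw [PowerSeries.coeff_mk, EneAux.plog_rescale, PowerSeries.coeff_rescale]
      rcases Nat.eq_zero_or_pos i with h0 | h0
      · subst h0
        simp [← PowerSeries.coeff_zero_eq_constantCoeff_apply, EneAux.constantCoeff_plog,
          PowerSeries.coeff_zero_eq_constantCoeff_apply]
      · rw [EneAux.coeff_plog_one_sub a (by omega), neg_mul_neg, mul_smul_comm,
          EneAux.inv_smul_nat_mul (show i ≠ 0 by omega)]
    rw [key, EneAux.pexp_plog hfa]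
end

section
/- For all f, g ∈ 𝒜 and every integer k ≥ 1: f(X^k) ⋆ g(X^k) = ((f ⋆ g)(X^k))^k. -/
open PowerSeries

/-- `f(X^k)`: the power series obtained from `f` by substituting `X^k` for `X`. -/
noncomputable def substPow {A : Type*} [CommRing A] (k : ℕ) (f : PowerSeries A) :
    PowerSeries A :=
  PowerSeries.mk fun n => if k ∣ n then PowerSeries.coeff (n / k) f else 0

section
variable {A : Type*} [CommRing A]

theorem coeff_substPow (k n : ℕ) (f : PowerSeries A) :
    PowerSeries.coeff n (substPow k f) = if k ∣ n then PowerSeries.coeff (n / k) f else 0 := by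
  simp [substPow]

theorem substPow_one {k : ℕ} (hk : 1 ≤ k) : substPow k (1 : PowerSeries A) = 1 := by
  ext n
  rw [coeff_substPow]
  split_ifs with h
  · rcases eq_or_ne n 0 with rfl | hn
    · simp
    · obtain ⟨c, rfl⟩ := h
      have hc : c ≠ 0 := by rintro rfl; simp at hn
      rw [Nat.mul_div_cancel_left c (by omega)]
      simp [PowerSeries.coeff_one, hc, Nat.mul_eq_zero, hn]
  · have hn : n ≠ 0 := by rintro rfl; exact h ⟨0, rfl⟩
    simp [PowerSeries.coeff_one, hn]

theorem substPow_mul {k : ℕ} (hk : 1 ≤ k) (f g : PowerSeries A) :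
    substPow k (f * g) = substPow k f * substPow k g := by
  ext n
  rw [coeff_substPow]
  simp only [coeff_substPow, PowerSeries.coeff_mul]
  by_cases hn : k ∣ n
  · obtain ⟨m, rfl⟩ := hn
    rw [if_pos (Dvd.intro m rfl), Nat.mul_div_cancel_left m (by omega)]
    symm
    rw [← Finset.sum_filter_of_ne (p := fun p : ℕ × ℕ => k ∣ p.1)]
    · refine Finset.sum_nbij' (fun p => ((p : ℕ × ℕ).1 / k, (p : ℕ × ℕ).2 / k))
        (fun q => (k * (q : ℕ × ℕ).1, k * (q : ℕ × ℕ).2)) ?_ ?_ ?_ ?_ ?_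
      · intro p hp
        simp only [Finset.mem_filter, Finset.HasAntidiagonal.mem_antidiagonal] at hp
        obtain ⟨hsum, hd⟩ := hp
        have hd2 : k ∣ p.2 := (Nat.dvd_add_right hd).mp (hsum ▸ Dvd.intro m rfl)
        rw [Finset.HasAntidiagonal.mem_antidiagonal]
        obtain ⟨a, ha⟩ := hd
        obtain ⟨b, hb⟩ := hd2
        simp only [ha, hb, Nat.mul_div_cancel_left _ (show 0 < k by omega)]
        have h2 : k * (a + b) = k * m := by rw [Nat.mul_add, ← ha, ← hb]; exact hsum
        exact Nat.eq_of_mul_eq_mul_left (Nat.lt_of_lt_of_le Nat.zero_lt_one hk) h2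
      · intro q hq
        rw [Finset.HasAntidiagonal.mem_antidiagonal] at hq
        simp only [Finset.mem_filter, Finset.HasAntidiagonal.mem_antidiagonal]
        exact ⟨by rw [← Nat.mul_add, hq], Dvd.intro _ rfl⟩
      · intro p hp
        simp only [Finset.mem_filter, Finset.HasAntidiagonal.mem_antidiagonal] at hp
        obtain ⟨hsum, hd⟩ := hp
        have hd2 : k ∣ p.2 := (Nat.dvd_add_right hd).mp (hsum ▸ Dvd.intro m rfl)
        obtain ⟨a, ha⟩ := hd
        obtain ⟨b, hb⟩ := hd2
        simp only [ha, hb, Nat.mul_div_cancel_left _ (Nat.lt_of_lt_of_le Nat.zero_lt_one hk)]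
        exact Prod.ext ha.symm hb.symm
      · intro q hq
        simp [Nat.mul_div_cancel_left _ (show 0 < k by omega)]
      · intro p hp
        simp only [Finset.mem_filter, Finset.HasAntidiagonal.mem_antidiagonal] at hp
        obtain ⟨hsum, hd⟩ := hp
        have hd2 : k ∣ p.2 := (Nat.dvd_add_right hd).mp (hsum ▸ Dvd.intro m rfl)
        rw [if_pos hd, if_pos hd2]
    · intro p hp hne
      by_contra hd
      rw [if_neg hd, zero_mul] at hne
      exact hne rfl
  · rw [if_neg hn]
    refine (Finset.sum_eq_zero fun p hp => ?_).symm
    rw [Finset.HasAntidiagonal.mem_antidiagonal] at hp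
    by_cases h1 : k ∣ p.1
    · rw [if_neg (fun h2 => hn (hp ▸ Nat.dvd_add h1 h2)), mul_zero]
    · rw [if_neg h1, zero_mul]

theorem substPow_pow {k : ℕ} (hk : 1 ≤ k) (f : PowerSeries A) (m : ℕ) :
    substPow k (f ^ m) = (substPow k f) ^ m := by
  induction m with
  | zero => simpa using substPow_one hk
  | succ m ih => rw [pow_succ, pow_succ, substPow_mul hk, ih]

end

section Aux
variable {A : Type*} [CommRing A]

theorem coeff_pow_eq_zero {F : PowerSeries A} (hF : PowerSeries.constantCoeff F = 0)
    {n i : ℕ} (h : n < i) : PowerSeries.coeff n (F ^ i) = 0 := by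
  have hdvd : (X : PowerSeries A) ^ i ∣ F ^ i :=
    pow_dvd_pow_of_dvd (PowerSeries.X_dvd_iff.mpr hF) i
  exact (PowerSeries.X_pow_dvd_iff.mp hdvd) n h

theorem substPow_sub (k : ℕ) (f g : PowerSeries A) :
    substPow k (f - g) = substPow k f - substPow k g := by
  ext n
  simp only [coeff_substPow, map_sub]
  split_ifs with h <;> simp

theorem constantCoeff_substPow (k : ℕ) (f : PowerSeries A) :
    PowerSeries.constantCoeff (substPow k f) = PowerSeries.constantCoeff f := by
  rw [← PowerSeries.coeff_zero_eq_constantCoeff_apply, coeff_substPow]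
  simp

theorem triangle_sum {M : Type*} [AddCommMonoid M] (n : ℕ) (T : ℕ → ℕ → M)
    (hT : ∀ i j, n < i + j → T i j = 0) :
    ∑ m ∈ Finset.range (n + 1), ∑ i ∈ Finset.range (m + 1), T i (m - i)
      = ∑ i ∈ Finset.range (n + 1), ∑ j ∈ Finset.range (n + 1), T i j := by
  have h1 : ∀ m, ∑ i ∈ Finset.range (m + 1), T i (m - i)
      = ∑ p ∈ Finset.HasAntidiagonal.antidiagonal m, T p.1 p.2 := by
    intro m
    rw [Finset.Nat.sum_antidiagonal_eq_sum_range_succ_mk]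
  simp_rw [h1]
  rw [← Finset.sum_biUnion]
  · rw [← Finset.sum_product']
    apply Finset.sum_subset
    · intro p hp
      rw [Finset.mem_biUnion] at hp
      obtain ⟨m, hm, hpm⟩ := hp
      rw [Finset.HasAntidiagonal.mem_antidiagonal] at hpm
      rw [Finset.mem_range] at hm
      rw [Finset.mem_product, Finset.mem_range, Finset.mem_range]
      omega
    · intro p hp hnp
      apply hT
      by_contra hle
      exact hnp (Finset.mem_biUnion.mpr ⟨p.1 + p.2, Finset.mem_range.mpr (by omega),
        Finset.HasAntidiagonal.mem_antidiagonal.mpr rfl⟩)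
  · intro a _ b _ hab
    simp only [Function.onFun]
    rw [Finset.disjoint_left]
    intro p hpa hpb
    rw [Finset.HasAntidiagonal.mem_antidiagonal] at hpa hpb
    exact hab (hpa ▸ hpb)

end Aux

section QAlg
variable {A : Type*} [CommRing A] [Algebra ℚ A]

theorem coeff_pexp (n : ℕ) (F : PowerSeries A) :
    PowerSeries.coeff n (pexp F)
      = ∑ i ∈ Finset.range (n + 1), ((i.factorial : ℚ)⁻¹) • (PowerSeries.coeff n (F ^ i)) := by
  simp [pexp]

theorem pexp_zero : pexp (0 : PowerSeries A) = 1 := by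
  ext n
  rw [coeff_pexp, Finset.sum_eq_single 0]
  · simp
  · intro i _ h0
    rw [zero_pow h0]
    simp
  · intro h
    simp at h

theorem coeff_pexp_of_le {F : PowerSeries A} (hF : PowerSeries.constantCoeff F = 0)
    {a n : ℕ} (h : a ≤ n) :
    PowerSeries.coeff a (pexp F)
      = ∑ i ∈ Finset.range (n + 1), ((i.factorial : ℚ)⁻¹) • (PowerSeries.coeff a (F ^ i)) := by
  rw [coeff_pexp]
  apply Finset.sum_subset
  · exact Finset.range_subset_range.mpr (by omega)
  · intro i _ hi
    rw [Finset.mem_range, not_lt] at hi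
    rw [coeff_pow_eq_zero hF (by omega)]
    simp

theorem pexp_add {F G : PowerSeries A} (hF : PowerSeries.constantCoeff F = 0)
    (hG : PowerSeries.constantCoeff G = 0) : pexp (F + G) = pexp F * pexp G := by
  ext n
  rw [PowerSeries.coeff_mul, coeff_pexp]
  -- RHS
  have hrhs : ∑ p ∈ Finset.HasAntidiagonal.antidiagonal n,
      PowerSeries.coeff p.1 (pexp F) * PowerSeries.coeff p.2 (pexp G)
      = ∑ i ∈ Finset.range (n + 1), ∑ j ∈ Finset.range (n + 1),
          (((i.factorial : ℚ)⁻¹) * ((j.factorial : ℚ)⁻¹)) •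
            (PowerSeries.coeff n (F ^ i * G ^ j)) := by
    have step : ∀ p ∈ Finset.HasAntidiagonal.antidiagonal n,
        PowerSeries.coeff p.1 (pexp F) * PowerSeries.coeff p.2 (pexp G)
        = ∑ i ∈ Finset.range (n + 1), ∑ j ∈ Finset.range (n + 1),
            (((i.factorial : ℚ)⁻¹) * ((j.factorial : ℚ)⁻¹)) •
              (PowerSeries.coeff p.1 (F ^ i) * PowerSeries.coeff p.2 (G ^ j)) := by
      intro p hp
      rw [Finset.HasAntidiagonal.mem_antidiagonal] at hp
      rw [coeff_pexp_of_le hF (show p.1 ≤ n by omega),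
        coeff_pexp_of_le hG (show p.2 ≤ n by omega), Finset.sum_mul_sum]
      apply Finset.sum_congr rfl
      intro i _
      apply Finset.sum_congr rfl
      intro j _
      rw [smul_mul_assoc, mul_smul_comm, smul_smul]
    rw [Finset.sum_congr rfl step, Finset.sum_comm]
    apply Finset.sum_congr rfl
    intro i _
    rw [Finset.sum_comm]
    apply Finset.sum_congr rfl
    intro j _
    rw [← Finset.smul_sum, ← PowerSeries.coeff_mul]
  rw [hrhs]
  -- LHS
  have hlhs : ∀ m ∈ Finset.range (n + 1),
      ((m.factorial : ℚ)⁻¹) • (PowerSeries.coeff n ((F + G) ^ m))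
      = ∑ i ∈ Finset.range (m + 1),
          (((i.factorial : ℚ)⁻¹) * (((m - i).factorial : ℚ)⁻¹)) •
            (PowerSeries.coeff n (F ^ i * G ^ (m - i))) := by
    intro m _
    rw [add_pow, map_sum, Finset.smul_sum]
    apply Finset.sum_congr rfl
    intro i hi
    rw [Finset.mem_range] at hi
    have hcast : ((m.choose i : ℕ) : PowerSeries A) = PowerSeries.C ((m.choose i : ℕ) : A) :=
      (map_natCast PowerSeries.C _).symm
    rw [hcast, PowerSeries.coeff_mul_C]
    have hA : ((m.choose i : ℕ) : A) = algebraMap ℚ A (m.choose i : ℚ) := by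
      rw [map_natCast]
    rw [hA, mul_comm, ← Algebra.smul_def, smul_smul]
    congr 1
    rw [Nat.cast_choose ℚ (by omega : i ≤ m)]
    have h1 : (i.factorial : ℚ) ≠ 0 := Nat.cast_ne_zero.mpr i.factorial_ne_zero
    have h2 : ((m - i).factorial : ℚ) ≠ 0 := Nat.cast_ne_zero.mpr (m - i).factorial_ne_zero
    have h3 : (m.factorial : ℚ) ≠ 0 := Nat.cast_ne_zero.mpr m.factorial_ne_zero
    field_simp
  rw [Finset.sum_congr rfl hlhs]
  exact triangle_sum n
    (fun i j => (((i.factorial : ℚ)⁻¹) * ((j.factorial : ℚ)⁻¹)) •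
      (PowerSeries.coeff n (F ^ i * G ^ j)))
    (fun i j hij => by
      have : PowerSeries.coeff n (F ^ i * G ^ j) = 0 := by
        have hdvd : (X : PowerSeries A) ^ (i + j) ∣ F ^ i * G ^ j := by
          rw [pow_add]
          exact mul_dvd_mul (pow_dvd_pow_of_dvd (PowerSeries.X_dvd_iff.mpr hF) i)
            (pow_dvd_pow_of_dvd (PowerSeries.X_dvd_iff.mpr hG) j)
        exact (PowerSeries.X_pow_dvd_iff.mp hdvd) n hij
      simp only [this, smul_zero])

theorem pexp_nsmul {G : PowerSeries A} (hG : PowerSeries.constantCoeff G = 0) (k : ℕ) :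
    pexp (k • G) = (pexp G) ^ k := by
  induction k with
  | zero => simpa using pexp_zero
  | succ m ih =>
    rw [succ_nsmul, pexp_add (by simp [map_nsmul, hG]) hG, ih, pow_succ]

end QAlg

section Main
variable {A : Type*} [CommRing A] [Algebra ℚ A]

theorem plog_substPow {k : ℕ} (hk : 1 ≤ k) {f : PowerSeries A}
    (hf : PowerSeries.constantCoeff f = 1) :
    plog (substPow k f) = substPow k (plog f) := by
  have hk' : 0 < k := by omega
  have hsub : substPow k f - 1 = substPow k (f - 1) := by
    rw [substPow_sub, substPow_one hk]
  have hf1 : PowerSeries.constantCoeff (f - 1) = 0 := by simp [hf]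
  ext n
  rw [coeff_substPow]
  simp only [plog, PowerSeries.coeff_mk]
  by_cases hn0 : n = 0
  · subst hn0
    simp
  · rw [if_neg hn0]
    simp_rw [hsub, ← substPow_pow hk, coeff_substPow]
    by_cases hd : k ∣ n
    · obtain ⟨m, rfl⟩ := hd
      have hm0 : m ≠ 0 := by rintro rfl; simp at hn0
      simp_rw [if_pos (Dvd.intro m rfl), Nat.mul_div_cancel_left m hk']
      rw [if_neg hm0]
      symm
      apply Finset.sum_subset
      · exact Finset.range_subset_range.mpr (by nlinarith)
      · intro i _ hni
        rw [Finset.mem_range, not_lt] at hni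
        rw [coeff_pow_eq_zero hf1 (by omega), smul_zero]
    · simp_rw [if_neg hd]
      simp

theorem pexp_substPow {k : ℕ} (hk : 1 ≤ k) {H : PowerSeries A}
    (hH : PowerSeries.constantCoeff H = 0) :
    pexp (substPow k H) = substPow k (pexp H) := by
  have hk' : 0 < k := by omega
  ext n
  rw [coeff_pexp, coeff_substPow]
  simp_rw [← substPow_pow hk, coeff_substPow]
  by_cases hd : k ∣ n
  · obtain ⟨m, rfl⟩ := hd
    simp_rw [if_pos (Dvd.intro m rfl), Nat.mul_div_cancel_left m hk']
    rw [coeff_pexp_of_le hH (show m ≤ k * m by nlinarith)]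
  · simp_rw [if_neg hd]
    simp

theorem ene_substPow_self' {A : Type*} [CommRing A] [Algebra ℚ A]
    (f g : PowerSeries A)
    (hf : PowerSeries.constantCoeff f = 1)
    (hg : PowerSeries.constantCoeff g = 1)
    (k : ℕ) (hk : 1 ≤ k) :
    ene (substPow k f) (substPow k g) = (substPow k (ene f g)) ^ k := by
  have hk' : 0 < k := by omega
  set H : PowerSeries A := PowerSeries.mk fun i =>
    -(i : A) * (PowerSeries.coeff i (plog f)) * (PowerSeries.coeff i (plog g)) with hH
  have hHc : PowerSeries.constantCoeff H = 0 := by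
    rw [← PowerSeries.coeff_zero_eq_constantCoeff_apply, hH, PowerSeries.coeff_mk]
    simp
  have key : (PowerSeries.mk fun i =>
      -(i : A) * (PowerSeries.coeff i (plog (substPow k f)))
        * (PowerSeries.coeff i (plog (substPow k g)))) = k • substPow k H := by
    ext i
    rw [PowerSeries.coeff_mk, map_nsmul, coeff_substPow, plog_substPow hk hf,
      plog_substPow hk hg, coeff_substPow, coeff_substPow]
    by_cases hd : k ∣ i
    · obtain ⟨c, rfl⟩ := hd
      rw [if_pos (Dvd.intro c rfl), if_pos (Dvd.intro c rfl), if_pos (Dvd.intro c rfl),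
        Nat.mul_div_cancel_left c hk', hH, PowerSeries.coeff_mk, nsmul_eq_mul]
      push_cast
      ring
    · rw [if_neg hd, if_neg hd, if_neg hd]
      simp
  rw [ene, key, pexp_nsmul (by rw [constantCoeff_substPow]; exact hHc) k,
    pexp_substPow hk hHc]
  rfl

end Main

/-- For `f, g ∈ 𝒜` and `k ≥ 1`: `f(X^k) ⋆ g(X^k) = ((f ⋆ g)(X^k))^k`. -/
theorem ene_substPow_self {A : Type*} [CommRing A] [Algebra ℚ A]
    (f g : PowerSeries A)
    (hf : PowerSeries.constantCoeff f = 1)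
    (hg : PowerSeries.constantCoeff g = 1)
    (k : ℕ) (hk : 1 ≤ k) :
    ene (substPow k f) (substPow k g) = (substPow k (ene f g)) ^ k := by
  exact ene_substPow_self' f g hf hg k hk
end

section
/- For all f, g ∈ 𝒜: 𝒟(f ⋆ g) = −𝒟(f) ⊙ 𝒟(g), where ⊙ denotes the Hadamard (coefficientwise) product of power series. -/
open PowerSeries

/-- Logarithmic derivative `𝒟 f = f′·f⁻¹` (for `f` with constant coefficient `1`). -/
noncomputable def logD {A : Type*} [CommRing A] (f : PowerSeries A) : PowerSeries A :=
  PowerSeries.derivativeFun f * PowerSeries.invOfUnit f 1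

/-- The Hadamard (coefficientwise) product of power series. -/
noncomputable def hadamard {A : Type*} [CommRing A] (u v : PowerSeries A) :
    PowerSeries A :=
  PowerSeries.mk fun n => PowerSeries.coeff n u * PowerSeries.coeff n v


section AuxEne

open Finset

variable {A : Type*} [CommRing A] [Algebra ℚ A]

variable {A : Type*} [CommRing A] [Algebra ℚ A]

lemma coeff_derivativeFun_aux (f : PowerSeries A) (n : ℕ) :
    PowerSeries.coeff n (PowerSeries.derivativeFun f) = PowerSeries.coeff (n + 1) f * (n + 1) :=
  PowerSeries.coeff_derivative f n

lemma derivPow (u : PowerSeries A) (k : ℕ) :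
    PowerSeries.derivativeFun (u ^ (k + 1)) = (k + 1) • (u ^ k * PowerSeries.derivativeFun u) := by
  induction k with
  | zero => simp
  | succ k ih =>
      rw [pow_succ, PowerSeries.derivativeFun_mul, ih]
      simp only [smul_eq_mul, nsmul_eq_mul]
      push_cast
      ring

lemma coeff_vanish {u : PowerSeries A} (hu : PowerSeries.constantCoeff u = 0)
    (w : PowerSeries A) {j k : ℕ} (h : j < k) : PowerSeries.coeff j (u ^ k * w) = 0 := by
  have hdvd : (PowerSeries.X : PowerSeries A) ^ k ∣ u ^ k * w :=
    Dvd.dvd.mul_right (pow_dvd_pow_of_dvd (PowerSeries.X_dvd_iff.mpr hu) k) w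
  exact (PowerSeries.X_pow_dvd_iff.mp hdvd) j h

lemma coeff_vanish' {u : PowerSeries A} (hu : PowerSeries.constantCoeff u = 0)
    {j k : ℕ} (h : j < k) : PowerSeries.coeff j (u ^ k) = 0 := by
  simpa using coeff_vanish hu 1 h

/-- derivative of a series given by coefficientwise sums of `c k • coeff (u^k)` -/
lemma deriv_S (u : PowerSeries A) (c : ℕ → ℚ) :
    PowerSeries.derivativeFun
        (PowerSeries.mk fun m => ∑ k ∈ Finset.range (m + 1), c k • PowerSeries.coeff m (u ^ k))
      = PowerSeries.mk fun n => ∑ k ∈ Finset.range (n + 1),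
          ((k + 1 : ℚ) * c (k + 1)) • PowerSeries.coeff n (u ^ k * PowerSeries.derivativeFun u) := by
  ext n
  rw [coeff_derivativeFun_aux, PowerSeries.coeff_mk, PowerSeries.coeff_mk]
  rw [Finset.sum_range_succ']
  simp only [pow_zero, PowerSeries.coeff_one, Nat.succ_ne_zero, if_false, ite_false,
    smul_zero, add_zero, if_neg (Nat.succ_ne_zero n)]
  rw [Finset.sum_mul]
  refine Finset.sum_congr rfl fun k _ => ?_
  have h1 : PowerSeries.coeff (n + 1) (u ^ (k + 1)) * (n + 1 : A)
      = (k + 1 : ℕ) • PowerSeries.coeff n (u ^ k * PowerSeries.derivativeFun u) := by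
    rw [← coeff_derivativeFun_aux, derivPow, map_nsmul]
  rw [smul_mul_assoc, h1, ← Nat.cast_smul_eq_nsmul ℚ, smul_smul, mul_comm (c (k+1))]
  push_cast
  ring_nf

lemma coeff_S_mul (b : ℕ → PowerSeries A)
    (hb : ∀ j k : ℕ, j < k → PowerSeries.coeff j (b k) = 0)
    (v : PowerSeries A) (c : ℕ → ℚ) (n : ℕ) :
    PowerSeries.coeff n
        ((PowerSeries.mk fun j => ∑ k ∈ Finset.range (j + 1), c k • PowerSeries.coeff j (b k)) * v)
      = ∑ k ∈ Finset.range (n + 1), c k • PowerSeries.coeff n (b k * v) := by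
  rw [PowerSeries.coeff_mul]
  have step : ∀ p ∈ antidiagonal n,
      PowerSeries.coeff p.1
          (PowerSeries.mk fun j => ∑ k ∈ Finset.range (j + 1), c k • PowerSeries.coeff j (b k))
        * PowerSeries.coeff p.2 v
      = ∑ k ∈ Finset.range (n + 1), c k • (PowerSeries.coeff p.1 (b k) * PowerSeries.coeff p.2 v) := by
    intro p hp
    rw [PowerSeries.coeff_mk]
    have hsub : Finset.range (p.1 + 1) ⊆ Finset.range (n + 1) := by
      apply Finset.range_subset_range.mpr
      exact Finset.Nat.antidiagonal.fst_lt hp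
    have hext : (∑ k ∈ Finset.range (p.1 + 1), c k • PowerSeries.coeff p.1 (b k))
        = ∑ k ∈ Finset.range (n + 1), c k • PowerSeries.coeff p.1 (b k) :=
      Finset.sum_subset hsub (fun k _ hk => by rw [hb p.1 k (by simpa using hk), smul_zero])
    rw [hext, Finset.sum_mul]
    exact Finset.sum_congr rfl fun k _ => smul_mul_assoc _ _ _
  rw [Finset.sum_congr rfl step, Finset.sum_comm]
  refine Finset.sum_congr rfl fun k _ => ?_
  rw [← Finset.smul_sum, PowerSeries.coeff_mul]


lemma constantCoeff_pexp (F : PowerSeries A) : PowerSeries.constantCoeff (pexp F) = 1 := by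
  rw [← PowerSeries.coeff_zero_eq_constantCoeff_apply, pexp, PowerSeries.coeff_mk]
  simp

lemma pexp_deriv (F : PowerSeries A) (hF : PowerSeries.constantCoeff F = 0) :
    PowerSeries.derivativeFun (pexp F) = PowerSeries.derivativeFun F * pexp F := by
  ext n
  rw [pexp, deriv_S F (fun k => ((k.factorial : ℚ)⁻¹)), PowerSeries.coeff_mk,
    mul_comm (PowerSeries.derivativeFun F),
    coeff_S_mul (fun k => F ^ k) (fun _ _ h => coeff_vanish' hF h) (PowerSeries.derivativeFun F)
      (fun k => ((k.factorial : ℚ)⁻¹)) n]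
  refine Finset.sum_congr rfl fun k _ => ?_
  congr 1
  have hk : ((k : ℚ) + 1) ≠ 0 := by positivity
  have hfac : ((k.factorial : ℚ)) ≠ 0 := by exact_mod_cast k.factorial_ne_zero
  rw [Nat.factorial_succ]
  push_cast
  field_simp


lemma plog_eq (f : PowerSeries A) : plog f = PowerSeries.mk fun n =>
    ∑ k ∈ Finset.range (n + 1),
      (((-1 : ℚ) ^ (k + 1)) / (k : ℚ)) • PowerSeries.coeff n ((f - 1) ^ k) := by
  ext n
  rw [plog, PowerSeries.coeff_mk, PowerSeries.coeff_mk]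
  rcases Nat.eq_zero_or_pos n with h | h
  · subst h; simp
  · rw [if_neg (Nat.pos_iff_ne_zero.mp h)]

lemma plog_deriv (f : PowerSeries A) (hf : PowerSeries.constantCoeff f = 1) :
    PowerSeries.derivativeFun f = PowerSeries.derivativeFun (plog f) * f := by
  have hu : PowerSeries.constantCoeff (f - 1) = 0 := by
    rw [map_sub, hf, map_one, sub_self]
  have hdu : PowerSeries.derivativeFun (f - 1) = PowerSeries.derivativeFun f := by
    ext n
    rw [coeff_derivativeFun_aux, coeff_derivativeFun_aux, map_sub,
      PowerSeries.coeff_one, if_neg (Nat.succ_ne_zero n), sub_zero]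
  have h2 : PowerSeries.derivativeFun (plog f) = PowerSeries.mk fun n =>
      ∑ k ∈ Finset.range (n + 1),
        ((-1 : ℚ) ^ k) • PowerSeries.coeff n ((f - 1) ^ k * PowerSeries.derivativeFun (f - 1)) := by
    rw [plog_eq, deriv_S (f - 1) (fun k => ((-1 : ℚ) ^ (k + 1)) / (k : ℚ))]
    ext n
    rw [PowerSeries.coeff_mk, PowerSeries.coeff_mk]
    refine Finset.sum_congr rfl fun k _ => ?_
    congr 1
    have hk : ((k : ℚ) + 1) ≠ 0 := by positivity
    push_cast
    field_simp
    ring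
  ext n
  rw [h2, coeff_S_mul (fun k => (f - 1) ^ k * PowerSeries.derivativeFun (f - 1))
      (fun _ _ h => coeff_vanish hu _ h) f (fun k => ((-1 : ℚ) ^ k)) n]
  have hstep : ∀ k : ℕ, ((-1 : ℚ) ^ k) •
        PowerSeries.coeff n ((f - 1) ^ k * PowerSeries.derivativeFun (f - 1) * f)
      = ((-1 : ℚ) ^ k) • PowerSeries.coeff n ((f - 1) ^ k * PowerSeries.derivativeFun (f - 1))
        - ((-1 : ℚ) ^ (k + 1)) • PowerSeries.coeff n
            ((f - 1) ^ (k + 1) * PowerSeries.derivativeFun (f - 1)) := by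
    intro k
    have hsplit : (f - 1) ^ k * PowerSeries.derivativeFun (f - 1) * f
        = (f - 1) ^ k * PowerSeries.derivativeFun (f - 1)
          + (f - 1) ^ (k + 1) * PowerSeries.derivativeFun (f - 1) := by
      ring
    rw [hsplit, map_add, smul_add, pow_succ (-1 : ℚ) k, mul_neg_one, neg_smul, sub_neg_eq_add]
  rw [Finset.sum_congr rfl fun k _ => hstep k,
    Finset.sum_range_sub' (fun k => ((-1 : ℚ) ^ k) •
      PowerSeries.coeff n ((f - 1) ^ k * PowerSeries.derivativeFun (f - 1))) (n + 1)]
  rw [coeff_vanish hu _ (Nat.lt_succ_self n), smul_zero, sub_zero]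
  simp [hdu]

lemma aux_logD_eq_of (φ w : PowerSeries A) (h1 : PowerSeries.constantCoeff φ = 1)
    (h2 : PowerSeries.derivativeFun φ = w * φ) : logD φ = w := by
  rw [logD, h2, mul_assoc, PowerSeries.mul_invOfUnit φ 1 (by rw [h1, Units.val_one]), mul_one]

end AuxEne

/-- **Eñe product and Hadamard multiplication**: for all `f, g ∈ 𝒜`,
`𝒟(f ⋆ g) = −𝒟(f) ⊙ 𝒟(g)`. -/
theorem logD_ene_eq_neg_hadamard {A : Type*} [CommRing A] [Algebra ℚ A]
    (f g : PowerSeries A)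
    (hf : PowerSeries.constantCoeff f = 1)
    (hg : PowerSeries.constantCoeff g = 1) :
    logD (ene f g) = -(hadamard (logD f) (logD g)) := by
  set F := plog f with hF
  set G := plog g with hG
  set H : PowerSeries A := PowerSeries.mk fun i =>
    -(i : A) * (PowerSeries.coeff i F) * (PowerSeries.coeff i G) with hH
  have h0 : PowerSeries.constantCoeff H = 0 := by
    rw [← PowerSeries.coeff_zero_eq_constantCoeff_apply, hH, PowerSeries.coeff_mk]
    simp
  have hene : logD (ene f g) = PowerSeries.derivativeFun H :=
    aux_logD_eq_of (pexp H) (PowerSeries.derivativeFun H) (constantCoeff_pexp H)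
      (pexp_deriv H h0)
  have hlf : logD f = PowerSeries.derivativeFun F :=
    aux_logD_eq_of f (PowerSeries.derivativeFun F) hf (plog_deriv f hf)
  have hlg : logD g = PowerSeries.derivativeFun G :=
    aux_logD_eq_of g (PowerSeries.derivativeFun G) hg (plog_deriv g hg)
  ext n
  rw [hene, map_neg, hadamard, PowerSeries.coeff_mk, hlf, hlg,
    coeff_derivativeFun_aux, coeff_derivativeFun_aux,
    coeff_derivativeFun_aux, hH, PowerSeries.coeff_mk]
  push_cast
  ring
end
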